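/- Isoperimetric duality: Let (V, ‖·‖_V) and (W, ‖·‖_W) be normed real vector spaces and φ : V → W a (not necessarily continuous) linear map. Let Ω ⊆ W* be the set of linear functionals ω : W → ℝ such that both ω and φ*ω := ω ∘ φ are bounded, and let φ* : Ω → V* be the adjoint ω ↦ ω ∘ φ. Define C₁ to be the least constant such that for every ε > 0, every w in the image of φ has a preimage v with ‖v‖_V ≤ C₁‖w‖_W + ε, and define C₂ to be the least constant such that for every ε > 0, every ν in the image of φ* has a preimage ω ∈ Ω with ‖ω‖_{W*} ≤ C₂‖ν‖_{V*} + ε. If C₁ and C₂ are both finite, then C₁ = C₂. -/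

import Mathlib

/-!
Isoperimetric duality (Theorem "IPD" of the paper).

`opNormFn f` is the operator norm of a (not necessarily continuous) linear functional `f`,
defined as the infimum of the constants `M ≥ 0` with `|f x| ≤ M * ‖x‖` for all `x`
(a linear functional is *bounded* when such an `M` exists).
-/

/-- A linear functional is bounded if `|f x| ≤ M ‖x‖` for some constant `M`. -/
def IsBddFunctional {E : Type*} [NormedAddCommGroup E] [NormedSpace ℝ E]
    (f : E →ₗ[ℝ] ℝ) : Prop :=
  ∃ M : ℝ, ∀ x, |f x| ≤ M * ‖x‖

/-- The operator norm of a (not necessarily continuous) linear functional. -/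
noncomputable def opNormFn {E : Type*} [NormedAddCommGroup E] [NormedSpace ℝ E]
    (f : E →ₗ[ℝ] ℝ) : ℝ :=
  sInf {M : ℝ | 0 ≤ M ∧ ∀ x, |f x| ≤ M * ‖x‖}

/-!
If every `w = φ v` has preimages of norm `≤ C ‖w‖ + ε`, the quotient norm of `v` in `V ⧸ ker φ`
is at most `C ‖φ v‖`, so every bounded `ν` vanishing on `ker φ` satisfies
`|ν v| ≤ C ‖ν‖ ‖φ v‖`: it factors through the range of `φ` with bound `C ‖ν‖`, and Hahn–Banach
extends the factor to all of `W`. This gives `C₂ ≤ C₁`. Conversely, Hahn–Banach on `V ⧸ ker φ`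
gives a functional `ν` with `‖ν‖ ≤ 1` attaining the quotient norm of `v`; by the first part (this
is where `C₁ < ∞` enters) `ν = ω ∘ φ` for some `ω ∈ Ω`, hence `ν = ω' ∘ φ` with
`‖ω'‖ ≤ C₂ + ε`, and the quotient norm of `v` is `ω' (φ v) ≤ (C₂ + ε) ‖φ v‖`. This gives
`C₁ ≤ C₂`. Both constants are nonnegative because a negative admissible constant would make
every constant admissible.
-/

open LinearMap

theorem LinearMap.exists_comp_rangeRestrict_eq_of_ker_le {R M N P : Type*} [Ring R]
    [AddCommGroup M] [AddCommGroup N] [AddCommGroup P] [Module R M] [Module R N] [Module R P]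
    (f : M →ₗ[R] N) (g : M →ₗ[R] P) (h : ker f ≤ ker g) :
    ∃ g' : range f →ₗ[R] P, g' ∘ₗ f.rangeRestrict = g :=
  ⟨(ker f).liftQ g h ∘ₗ f.quotKerEquivRange.symm, by
    ext x
    have hx : f.quotKerEquivRange.symm (f.rangeRestrict x) = (ker f).mkQ x :=
      f.quotKerEquivRange.symm_apply_eq.mpr (Subtype.ext (f.quotKerEquivRange_apply_mk x).symm)
    simp [hx]⟩

section Functionals

variable {E : Type*} [NormedAddCommGroup E] [NormedSpace ℝ E]

lemma opNormFn_nonneg (f : E →ₗ[ℝ] ℝ) : 0 ≤ opNormFn f :=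
  Real.sInf_nonneg fun _ h => h.1

lemma opNormFn_le {f : E →ₗ[ℝ] ℝ} {M : ℝ} (hM : 0 ≤ M) (h : ∀ x, |f x| ≤ M * ‖x‖) :
    opNormFn f ≤ M :=
  csInf_le ⟨0, fun _ h => h.1⟩ ⟨hM, h⟩

lemma abs_le_opNormFn {f : E →ₗ[ℝ] ℝ} (hf : IsBddFunctional f) (x : E) :
    |f x| ≤ opNormFn f * ‖x‖ := by
  obtain ⟨M, hM⟩ := hf
  have hne : {M : ℝ | 0 ≤ M ∧ ∀ x, |f x| ≤ M * ‖x‖}.Nonempty :=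
    ⟨max M 0, le_max_right _ _, fun y => (hM y).trans (by gcongr; exact le_max_left _ _)⟩
  rcases eq_or_ne x 0 with rfl | hx
  · simp
  have hx : 0 < ‖x‖ := norm_pos_iff.mpr hx
  rw [← div_le_iff₀ hx]
  exact le_csInf hne fun M' hM' => (div_le_iff₀ hx).mpr (hM'.2 x)

lemma abs_le_opNormFn_mul_norm_mkQ {f : E →ₗ[ℝ] ℝ} (hf : IsBddFunctional f)
    {K : Submodule ℝ E} (hK : K ≤ ker f) (x : E) : |f x| ≤ opNormFn f * ‖K.mkQ x‖ := by
  rcases (opNormFn_nonneg f).eq_or_lt with h0 | hpos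
  · simpa [← h0] using abs_le_opNormFn hf x
  rw [← div_le_iff₀' hpos, Submodule.mkQ_apply]
  refine QuotientAddGroup.le_norm_iff.mpr fun y hy => ?_
  have hxy : f x = f y := by
    rw [← sub_eq_zero, ← map_sub]
    exact hK ((Submodule.Quotient.eq K).mp hy.symm)
  rw [div_le_iff₀' hpos, hxy]
  exact abs_le_opNormFn hf y

theorem exists_dual_vector_mkQ (K : Submodule ℝ E) (x : E) :
    ∃ f : E →ₗ[ℝ] ℝ, (∀ y, |f y| ≤ ‖y‖) ∧ K ≤ ker f ∧ f x = ‖K.mkQ x‖ := by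
  obtain ⟨g, hg, hgx⟩ := exists_dual_vector'' ℝ (K.mkQ x)
  refine ⟨(g : E ⧸ K →ₗ[ℝ] ℝ) ∘ₗ K.mkQ, fun y => ?_, fun y hy => ?_, hgx⟩
  · calc |g (K.mkQ y)| = ‖g (K.mkQ y)‖ := (Real.norm_eq_abs _).symm
      _ ≤ ‖g‖ * ‖K.mkQ y‖ := g.le_opNorm _
      _ ≤ 1 * ‖y‖ := by gcongr; exact Submodule.Quotient.norm_mk_le K y
      _ = ‖y‖ := one_mul _
  · simp [(Submodule.Quotient.mk_eq_zero K).mpr hy]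

end Functionals

section Duality

variable {V W : Type*} [NormedAddCommGroup V] [NormedSpace ℝ V]
  [NormedAddCommGroup W] [NormedSpace ℝ W] (φ : V →ₗ[ℝ] W)

/-- The domain `Ω` of the adjoint `φ* : ω ↦ ω ∘ φ`. -/
def adjointDomain : Set (W →ₗ[ℝ] ℝ) := {ω | IsBddFunctional ω ∧ IsBddFunctional (ω ∘ₗ φ)}

def PreimageBound (C : ℝ) : Prop :=
  ∀ ε > 0, ∀ w : W, (∃ v, φ v = w) → ∃ v, φ v = w ∧ ‖v‖ ≤ C * ‖w‖ + ε

def AdjointPreimageBound (C : ℝ) : Prop :=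
  ∀ ε > 0, ∀ ν : V →ₗ[ℝ] ℝ, (∃ ω ∈ adjointDomain φ, ω ∘ₗ φ = ν) →
    ∃ ω ∈ adjointDomain φ, ω ∘ₗ φ = ν ∧ opNormFn ω ≤ C * opNormFn ν + ε

variable {φ} {C : ℝ}

theorem preimageBound_iff_norm_mkQ_le :
    PreimageBound φ C ↔ ∀ v, ‖(ker φ).mkQ v‖ ≤ C * ‖φ v‖ := by
  constructor
  · intro h v
    refine le_of_forall_pos_le_add fun ε hε => ?_
    obtain ⟨u, hu, hu_le⟩ := h ε hε (φ v) ⟨v, rfl⟩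
    have hmk : (ker φ).mkQ u = (ker φ).mkQ v :=
      (Submodule.Quotient.eq _).mpr (by simp [hu])
    calc ‖(ker φ).mkQ v‖ = ‖(ker φ).mkQ u‖ := by rw [hmk]
      _ ≤ ‖u‖ := Submodule.Quotient.norm_mk_le _ u
      _ ≤ C * ‖φ v‖ + ε := hu_le
  · rintro h ε hε _ ⟨v, rfl⟩
    obtain ⟨u, hu, hu_lt⟩ := Submodule.Quotient.norm_mk_lt ((ker φ).mkQ v) hε
    refine ⟨u, ?_, hu_lt.le.trans (by grw [h v])⟩
    simpa [sub_eq_zero] using (Submodule.Quotient.eq _).mp hu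

theorem PreimageBound.of_neg (h : PreimageBound φ C) (hC : C < 0) (C' : ℝ) :
    PreimageBound φ C' := by
  rw [preimageBound_iff_norm_mkQ_le] at h ⊢
  intro v
  have hmk := norm_nonneg ((ker φ).mkQ v)
  have hφv : ‖φ v‖ = 0 := by nlinarith [h v, norm_nonneg (φ v)]
  simpa [hφv] using h v

theorem AdjointPreimageBound.of_neg (h : AdjointPreimageBound φ C) (hC : C < 0) (C' : ℝ) :
    AdjointPreimageBound φ C' := by
  intro ε hε ν hν
  have hν0 : opNormFn ν = 0 := by
    refine le_antisymm (not_lt.mp fun hpos => ?_) (opNormFn_nonneg ν)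
    obtain ⟨ω, -, -, hω⟩ := h (-(C * opNormFn ν) / 2) (by nlinarith) ν hν
    nlinarith [opNormFn_nonneg ω]
  simpa [hν0] using h ε hε ν hν

theorem PreimageBound.exists_extension (h : PreimageBound φ C) (hC : 0 ≤ C)
    {ν : V →ₗ[ℝ] ℝ} (hν : IsBddFunctional ν) (hker : ker φ ≤ ker ν) :
    ∃ ω : W →ₗ[ℝ] ℝ, ω ∘ₗ φ = ν ∧ ∀ w, |ω w| ≤ C * opNormFn ν * ‖w‖ := by
  obtain ⟨g, hg⟩ := φ.exists_comp_rangeRestrict_eq_of_ker_le ν hker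
  have hg_le : ∀ x, ‖g x‖ ≤ C * opNormFn ν * ‖x‖ := by
    intro x
    obtain ⟨v, rfl⟩ := φ.surjective_rangeRestrict x
    rw [Real.norm_eq_abs, ← comp_apply, hg]
    calc |ν v| ≤ opNormFn ν * ‖(ker φ).mkQ v‖ := abs_le_opNormFn_mul_norm_mkQ hν hker v
      _ ≤ opNormFn ν * (C * ‖φ v‖) := by
          gcongr
          · exact opNormFn_nonneg ν
          · exact preimageBound_iff_norm_mkQ_le.mp h v
      _ = C * opNormFn ν * ‖φ.rangeRestrict v‖ := by
          rw [show ‖φ.rangeRestrict v‖ = ‖φ v‖ from rfl]; ring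
  have hM : 0 ≤ C * opNormFn ν := mul_nonneg hC (opNormFn_nonneg ν)
  obtain ⟨ω, hωg, hω_norm⟩ := exists_extension_norm_eq (range φ) (g.mkContinuous _ hg_le)
  refine ⟨ω, ?_, fun w => ?_⟩
  · ext v
    simpa [← hg] using hωg (φ.rangeRestrict v)
  · calc |ω w| = ‖ω w‖ := (Real.norm_eq_abs _).symm
      _ ≤ ‖ω‖ * ‖w‖ := ω.le_opNorm w
      _ ≤ C * opNormFn ν * ‖w‖ := by
          gcongr
          exact hω_norm.trans_le (g.mkContinuous_norm_le hM hg_le)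

theorem PreimageBound.adjointPreimageBound (h : PreimageBound φ C) (hC : 0 ≤ C) :
    AdjointPreimageBound φ C := by
  rintro ε hε _ ⟨ω₀, ⟨-, hν⟩, rfl⟩
  obtain ⟨ω, hωφ, hω⟩ := h.exists_extension hC hν (ker_le_ker_comp φ ω₀)
  refine ⟨ω, ⟨⟨_, hω⟩, hωφ ▸ hν⟩, hωφ, ?_⟩
  exact (opNormFn_le (mul_nonneg hC (opNormFn_nonneg _)) hω).trans (le_add_of_nonneg_right hε.le)

theorem AdjointPreimageBound.preimageBound {C' : ℝ} (h : AdjointPreimageBound φ C)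
    (hC : 0 ≤ C) (h' : PreimageBound φ C') (hC' : 0 ≤ C') : PreimageBound φ C := by
  rw [preimageBound_iff_norm_mkQ_le]
  intro v
  obtain ⟨ν, hν_le, hker, hνv⟩ := exists_dual_vector_mkQ (ker φ) v
  have hν_le' : ∀ x, |ν x| ≤ 1 * ‖x‖ := by simpa using hν_le
  have hν : IsBddFunctional ν := ⟨1, hν_le'⟩
  obtain ⟨ω, hωφ, hω⟩ := h'.exists_extension hC' hν hker
  refine le_of_forall_pos_le_add fun ε hε => ?_
  have hδ : 0 < ε / (‖φ v‖ + 1) := by positivity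
  obtain ⟨ω', ⟨hω'_bdd, -⟩, hω'φ, hω'_le⟩ :=
    h _ hδ ν ⟨ω, ⟨⟨_, hω⟩, hωφ ▸ hν⟩, hωφ⟩
  have hω'_le' : opNormFn ω' ≤ C + ε / (‖φ v‖ + 1) := by
    grw [hω'_le, opNormFn_le zero_le_one hν_le', mul_one]
  calc ‖(ker φ).mkQ v‖ = ω' (φ v) := by rw [← hνv, ← hω'φ, comp_apply]
    _ ≤ opNormFn ω' * ‖φ v‖ := (le_abs_self _).trans (abs_le_opNormFn hω'_bdd _)
    _ ≤ (C + ε / (‖φ v‖ + 1)) * ‖φ v‖ := by gcongr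
    _ ≤ C * ‖φ v‖ + ε := by
        rw [add_mul, div_mul_eq_mul_div]
        gcongr
        exact div_le_of_le_mul₀ (by positivity) hε.le (by nlinarith [norm_nonneg (φ v)])

end Duality

/-- **Isoperimetric duality.**  Let `φ : V → W` be a linear map between normed real vector
spaces, let `Ω` be the set of linear functionals `ω : W → ℝ` such that both `ω` and
`ω ∘ φ` are bounded, and let `φ* : Ω → V*` be `ω ↦ ω ∘ φ`.  If `C₁` is the least constant
such that for every `ε > 0` every `w` in the image of `φ` has a preimage `v` with
`‖v‖ ≤ C₁ ‖w‖ + ε`, and `C₂` is the least constant such that for every `ε > 0` every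
`ν` in the image of `φ*` has a preimage `ω ∈ Ω` with `‖ω‖ ≤ C₂ ‖ν‖ + ε` (in particular
both constants exist, i.e. are finite), then `C₁ = C₂`. -/
theorem isoperimetric_duality
    {V W : Type*} [NormedAddCommGroup V] [NormedSpace ℝ V]
    [NormedAddCommGroup W] [NormedSpace ℝ W]
    (φ : V →ₗ[ℝ] W)
    (Ω : Set (W →ₗ[ℝ] ℝ))
    (hΩ : Ω = {ω | IsBddFunctional ω ∧ IsBddFunctional (ω ∘ₗ φ)})
    (C₁ C₂ : ℝ)
    (h₁ : IsLeast {C : ℝ |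
      ∀ ε > 0, ∀ w : W, (∃ v, φ v = w) →
        ∃ v, φ v = w ∧ ‖v‖ ≤ C * ‖w‖ + ε} C₁)
    (h₂ : IsLeast {C : ℝ |
      ∀ ε > 0, ∀ ν : V →ₗ[ℝ] ℝ, (∃ ω ∈ Ω, ω ∘ₗ φ = ν) →
        ∃ ω ∈ Ω, ω ∘ₗ φ = ν ∧ opNormFn ω ≤ C * opNormFn ν + ε} C₂) :
    C₁ = C₂ := by
  subst hΩ
  obtain ⟨hC₁ : PreimageBound φ C₁, hleast₁⟩ := h₁
  obtain ⟨hC₂ : AdjointPreimageBound φ C₂, hleast₂⟩ := h₂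
  have hC₁_nonneg : 0 ≤ C₁ :=
    not_lt.mp fun hneg => by linarith [hleast₁ (hC₁.of_neg hneg (C₁ - 1))]
  have hC₂_nonneg : 0 ≤ C₂ :=
    not_lt.mp fun hneg => by linarith [hleast₂ (hC₂.of_neg hneg (C₂ - 1))]
  exact le_antisymm (hleast₁ (hC₂.preimageBound hC₂_nonneg hC₁ hC₁_nonneg))
    (hleast₂ (hC₁.adjointPreimageBound hC₁_nonneg))
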